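/- arXiv:1903.12612 — 8 statements merged into one kernel-verified Lean document; each statement's English description precedes it below -/
import Mathlib

section
/- Let V be a finite-dimensional complex vector space, I a finite set with a total order ≤, F an I-filtration of V, and Γ₀ an I-grading of V splitting F. Let U(F) = { g ∈ GL(V) : (g − 1)(F(i)) ⊆ F(<i) for all i ∈ I }. Then the map g ↦ (i ↦ g(Γ₀(i))) is a bijection from U(F) onto the set of all I-gradings of V that split F. In particular, for every I-grading Γ splitting F there is a unique g ∈ GL(V) with (g − 1)(F(i)) ⊆ F(<i) for all i and g(Γ₀(i)) = Γ(i) for all i. -/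
open Submodule

variable {V : Type} [AddCommGroup V] [Module ℂ V] [FiniteDimensional ℂ V]
variable {I : Type} [Fintype I]

/-- `Γ` is an `I`-grading of `V`: the family of subspaces is independent and spans `V`,
so that `V` is their internal direct sum. -/
def IsGrading (Γ : I → Submodule ℂ V) : Prop :=
  iSupIndep Γ ∧ ⨆ i, Γ i = ⊤

/-- The filtration associated to a grading `Γ` and an order `le` on `I`:
`F(Γ,≤)(i) = Σ_{j ≤ i} Γ(j)`. -/
def assocFilt (Γ : I → Submodule ℂ V) (le : I → I → Prop) (i : I) : Submodule ℂ V :=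
  ⨆ j ∈ {j | le j i}, Γ j

/-- `F` is an `I`-filtration of `V` with respect to the order `le`. -/
def IsIFiltration (le : I → I → Prop) (F : I → Submodule ℂ V) : Prop :=
  ∀ i j, le i j → F i ≤ F j

/-- `F(<i) = Σ_{j < i} F(j)`, where `j < i` means `j ≤ i` and `j ≠ i`. -/
def filtLT (le : I → I → Prop) (F : I → Submodule ℂ V) (i : I) : Submodule ℂ V :=
  ⨆ j ∈ {j | le j i ∧ j ≠ i}, F j

/-- The grading `Γ` splits the filtration `F` (with respect to `le`). -/
def SplitsF (le : I → I → Prop) (F Γ : I → Submodule ℂ V) : Prop :=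
  IsGrading Γ ∧ ∀ i, F i = assocFilt Γ le i

/-- The unipotent radical `U(F)` of the parabolic subgroup attached to the filtration `F`:
all `g ∈ GL(V)` with `(g − 1)(F(i)) ⊆ F(<i)` for all `i`. -/
def Ugrp (le : I → I → Prop) (F : I → Submodule ℂ V) : Set (V ≃ₗ[ℂ] V) :=
  {g | ∀ i, ∀ v ∈ F i, g v - v ∈ filtLT le F i}

/-!
If a grading `Γ` splits `F`, then `F(<i) = ⨁_{j<i} Γ(j)` and `F(i) = Γ(i) ⊕ F(<i)`. Hence for a
second splitting `Δ`, the projection `π^Δ_i` onto `Δ(i)` along the other pieces of `Δ` kills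
`F(<i)` and moves vectors of `F(i)` only by elements of `F(<i)`. So `Σ_i π^Δ_i ∘ π^Γ_i` maps `Γ(i)`
onto `Δ(i)`, lies in `U(F)`, and is inverted by the same construction with `Γ` and `Δ` swapped.
Conversely, if `g, g' ∈ U(F)` both send `Γ(i)` to `Δ(i)`, then for `v ∈ Γ(i)` the vector
`g v - g' v` lies in `Δ(i) ∩ F(<i) = 0`. That `g(Γ)` splits `F` for every `g ∈ U(F)` comes from
`g(F(i)) = F(i)`: `g` maps `F(i)` into itself, and `V` is finite-dimensional.
-/

namespace IsGrading

section
omit [FiniteDimensional ℂ V] [Fintype I]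

variable {Γ : I → Submodule ℂ V}

theorem isCompl (h : IsGrading Γ) (i : I) : IsCompl (Γ i) (⨆ j ≠ i, Γ j) :=
  ⟨h.1 i, codisjoint_iff.mpr (by rw [← iSup_split_single, h.2])⟩

noncomputable def proj (h : IsGrading Γ) (i : I) : V →ₗ[ℂ] V :=
  (Γ i).projection _ (h.isCompl i)

theorem proj_mem (h : IsGrading Γ) (i : I) (v : V) : h.proj i v ∈ Γ i :=
  projection_apply_mem _ v

theorem proj_apply_of_mem (h : IsGrading Γ) {i : I} {v : V} (hv : v ∈ Γ i) :
    h.proj i v = v :=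
  projection_apply_of_mem_left _ hv

theorem proj_eq_zero_of_mem_biSup (h : IsGrading Γ) {s : Set I} {i : I} (hi : i ∉ s) {v : V}
    (hv : v ∈ ⨆ j ∈ s, Γ j) : h.proj i v = 0 :=
  projection_apply_of_mem_right _
    (biSup_mono (f := Γ) (fun _ hj => ne_of_mem_of_not_mem hj hi) hv)

theorem sub_proj_mem_biSup (h : IsGrading Γ) (s : Set I) (i : I) {v : V}
    (hv : v ∈ ⨆ j ∈ s, Γ j) : v - h.proj i v ∈ ⨆ j ∈ s \ {i}, Γ j := by
  suffices (⨆ j ∈ s, Γ j) ≤ (⨆ j ∈ s \ {i}, Γ j).comap (LinearMap.id - h.proj i) from this hv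
  refine iSup₂_le fun j hj w hw => ?_
  rcases eq_or_ne j i with rfl | hji
  · simp [h.proj_apply_of_mem hw]
  · have hproj : h.proj i w = 0 :=
      h.proj_eq_zero_of_mem_biSup (s := {j}) (by simpa using hji.symm) (by simpa using hw)
    simpa [hproj] using le_iSup₂ (f := fun j (_ : j ∈ s \ {i}) => Γ j) j ⟨hj, hji⟩ hw

theorem linearMap_ext (h : IsGrading Γ) {f f' : V →ₗ[ℂ] V}
    (hff' : ∀ i, ∀ v ∈ Γ i, f v = f' v) : f = f' := by
  suffices ⊤ ≤ LinearMap.eqLocus f f' from LinearMap.ext fun v => this mem_top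
  exact h.2 ▸ iSup_le fun i v hv => hff' i v hv

theorem map_linearEquiv (h : IsGrading Γ) (g : V ≃ₗ[ℂ] V) :
    IsGrading (fun i => (Γ i).map (g : V →ₗ[ℂ] V)) :=
  ⟨h.1.map_orderIso (orderIsoMapComap g), by
    rw [← Submodule.map_iSup, h.2, Submodule.map_top, LinearEquiv.range]⟩

end

noncomputable def transfer {Γ Δ : I → Submodule ℂ V} (hΓ : IsGrading Γ) (hΔ : IsGrading Δ) :
    V →ₗ[ℂ] V :=
  ∑ i, hΔ.proj i ∘ₗ hΓ.proj i

omit [FiniteDimensional ℂ V] in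
theorem transfer_apply_of_mem {Γ Δ : I → Submodule ℂ V} (hΓ : IsGrading Γ) (hΔ : IsGrading Δ)
    {i : I} {v : V} (hv : v ∈ Γ i) : hΓ.transfer hΔ v = hΔ.proj i v := by
  rw [transfer, LinearMap.sum_apply, Finset.sum_eq_single i]
  · simp [hΓ.proj_apply_of_mem hv]
  · intro j _ hji
    simp [hΓ.proj_eq_zero_of_mem_biSup (s := {i}) (by simpa using hji) (by simpa using hv)]
  · simp

end IsGrading

section Splitting
omit [FiniteDimensional ℂ V] [Fintype I]

variable {le : I → I → Prop} [IsPartialOrder I le] {F Γ : I → Submodule ℂ V}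

theorem filtLT_mono {i j : I} (hji : le j i) : filtLT le F j ≤ filtLT le F i :=
  biSup_mono fun k hk => ⟨trans_of le hk.1 hji,
    by rintro rfl; exact hk.2 (antisymm_of le hk.1 hji)⟩

theorem le_of_splits (hΓ : SplitsF le F Γ) (i : I) : Γ i ≤ F i := by
  rw [hΓ.2 i]
  exact le_iSup₂ (f := fun j (_ : j ∈ {j | le j i}) => Γ j) i (refl_of le i)

theorem filtLT_eq_biSup_of_splits (hΓ : SplitsF le F Γ) (i : I) :
    filtLT le F i = ⨆ j ∈ {j | le j i ∧ j ≠ i}, Γ j := by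
  refine le_antisymm (iSup₂_le fun j hj => ?_) (iSup₂_mono fun j _ => le_of_splits hΓ j)
  rw [hΓ.2 j]
  exact biSup_mono fun k hk => ⟨trans_of le hk hj.1,
    by rintro rfl; exact hj.2 (antisymm_of le hj.1 hk)⟩

theorem filtLT_le_of_splits (hΓ : SplitsF le F Γ) (i : I) : filtLT le F i ≤ F i := by
  rw [filtLT_eq_biSup_of_splits hΓ, hΓ.2 i]
  exact biSup_mono fun _ hj => hj.1

theorem disjoint_filtLT_of_splits (hΓ : SplitsF le F Γ) (i : I) :
    Disjoint (Γ i) (filtLT le F i) := by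
  rw [filtLT_eq_biSup_of_splits hΓ]
  exact (hΓ.1.1 i).mono_right (biSup_mono fun _ hj => hj.2)

theorem sub_proj_mem_filtLT (hΓ : SplitsF le F Γ) {i : I} {v : V} (hv : v ∈ F i) :
    v - hΓ.1.proj i v ∈ filtLT le F i := by
  rw [hΓ.2 i] at hv
  rw [filtLT_eq_biSup_of_splits hΓ]
  exact hΓ.1.sub_proj_mem_biSup _ i hv

theorem proj_eq_zero_of_mem_filtLT (hΓ : SplitsF le F Γ) {i : I} {v : V}
    (hv : v ∈ filtLT le F i) : hΓ.1.proj i v = 0 := by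
  rw [filtLT_eq_biSup_of_splits hΓ] at hv
  exact hΓ.1.proj_eq_zero_of_mem_biSup (fun hi => hi.2 rfl) hv

theorem mem_Ugrp_of_sub_mem_filtLT (hΓ : SplitsF le F Γ) {g : V ≃ₗ[ℂ] V}
    (hg : ∀ j, ∀ v ∈ Γ j, g v - v ∈ filtLT le F j) : g ∈ Ugrp le F := by
  intro i v hv
  suffices F i ≤ (filtLT le F i).comap ((g : V →ₗ[ℂ] V) - LinearMap.id) by simpa using this hv
  rw [hΓ.2 i]
  exact iSup₂_le fun j hj w hw => by simpa using filtLT_mono hj (hg j w hw)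

end Splitting

section Unipotent
omit [Fintype I]

variable {le : I → I → Prop} [IsPartialOrder I le] {F Γ : I → Submodule ℂ V}

theorem map_eq_of_mem_Ugrp (hΓ : SplitsF le F Γ) {g : V ≃ₗ[ℂ] V} (hg : g ∈ Ugrp le F) (i : I) :
    (F i).map (g : V →ₗ[ℂ] V) = F i := by
  refine eq_of_le_of_finrank_le ?_ (LinearEquiv.finrank_map_eq g (F i)).ge
  rintro _ ⟨v, hv, rfl⟩
  simpa using add_mem hv (filtLT_le_of_splits hΓ i (hg i v hv))

theorem splits_map_of_mem_Ugrp (hΓ : SplitsF le F Γ) {g : V ≃ₗ[ℂ] V} (hg : g ∈ Ugrp le F) :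
    SplitsF le F (fun i => (Γ i).map (g : V →ₗ[ℂ] V)) := by
  refine ⟨hΓ.1.map_linearEquiv g, fun i => ?_⟩
  rw [← map_eq_of_mem_Ugrp hΓ hg i, hΓ.2 i, assocFilt, assocFilt]
  simp only [Submodule.map_iSup]

theorem eq_of_mem_Ugrp_of_map_eq (hΓ : SplitsF le F Γ) {g g' : V ≃ₗ[ℂ] V}
    (hg : g ∈ Ugrp le F) (hg' : g' ∈ Ugrp le F)
    (hgg' : ∀ i, (Γ i).map (g : V →ₗ[ℂ] V) = (Γ i).map (g' : V →ₗ[ℂ] V)) : g = g' := by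
  refine LinearEquiv.toLinearMap_injective (hΓ.1.linearMap_ext fun i v hv => ?_)
  have hvF := le_of_splits hΓ i hv
  have hmap : g v - g' v ∈ (Γ i).map (g : V →ₗ[ℂ] V) :=
    sub_mem (mem_map_of_mem hv) (hgg' i ▸ mem_map_of_mem hv)
  have hlt : g v - g' v ∈ filtLT le F i := by
    simpa using sub_mem (hg i v hvF) (hg' i v hvF)
  have hdisj := disjoint_filtLT_of_splits (splits_map_of_mem_Ugrp hΓ hg) i
  exact sub_eq_zero.mp (disjoint_def.mp hdisj _ hmap hlt)

end Unipotent

section Transfer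
omit [FiniteDimensional ℂ V]

variable {le : I → I → Prop} [IsPartialOrder I le] {F Γ Δ : I → Submodule ℂ V}

theorem transfer_transfer_of_mem (hΓ : SplitsF le F Γ) (hΔ : SplitsF le F Δ) {i : I} {v : V}
    (hv : v ∈ Γ i) : hΔ.1.transfer hΓ.1 (hΓ.1.transfer hΔ.1 v) = v := by
  rw [hΓ.1.transfer_apply_of_mem hΔ.1 hv, hΔ.1.transfer_apply_of_mem hΓ.1 (hΔ.1.proj_mem i v)]
  have hlt : v - hΔ.1.proj i v ∈ filtLT le F i := sub_proj_mem_filtLT hΔ (le_of_splits hΓ i hv)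
  calc hΓ.1.proj i (hΔ.1.proj i v)
      = hΓ.1.proj i v - hΓ.1.proj i (v - hΔ.1.proj i v) := by rw [map_sub, sub_sub_cancel]
    _ = v := by rw [proj_eq_zero_of_mem_filtLT hΓ hlt, sub_zero, hΓ.1.proj_apply_of_mem hv]

theorem transfer_comp_transfer (hΓ : SplitsF le F Γ) (hΔ : SplitsF le F Δ) :
    hΔ.1.transfer hΓ.1 ∘ₗ hΓ.1.transfer hΔ.1 = LinearMap.id :=
  hΓ.1.linearMap_ext fun _ _ hv => transfer_transfer_of_mem hΓ hΔ hv

theorem exists_mem_Ugrp_map_eq (hΓ : SplitsF le F Γ) (hΔ : SplitsF le F Δ) :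
    ∃ g ∈ Ugrp le F, ∀ i, (Γ i).map (g : V →ₗ[ℂ] V) = Δ i := by
  let g : V ≃ₗ[ℂ] V := LinearEquiv.ofLinearMap (hΓ.1.transfer hΔ.1) (hΔ.1.transfer hΓ.1)
    (transfer_comp_transfer hΔ hΓ) (transfer_comp_transfer hΓ hΔ)
  have hgΓ : ∀ {i v}, v ∈ Γ i → g v = hΔ.1.proj i v := hΓ.1.transfer_apply_of_mem hΔ.1
  refine ⟨g, mem_Ugrp_of_sub_mem_filtLT hΓ fun j v hv => ?_,
    fun i => le_antisymm ?_ fun u hu => ?_⟩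
  · rw [hgΓ hv, ← neg_sub]
    exact neg_mem (sub_proj_mem_filtLT hΔ (le_of_splits hΓ j hv))
  · rintro _ ⟨v, hv, rfl⟩
    exact (hgΓ hv).symm ▸ hΔ.1.proj_mem i v
  · refine ⟨g.symm u, ?_, g.apply_symm_apply u⟩
    exact (hΔ.1.transfer_apply_of_mem hΓ.1 hu).symm ▸ hΓ.1.proj_mem i u

end Transfer

theorem splittings_torsor_under_unipotent_radical_general
    (le : I → I → Prop) (hle : IsLinearOrder I le)
    (F Γ₀ : I → Submodule ℂ V) (hΓ₀ : SplitsF le F Γ₀) :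
    Set.BijOn (fun (g : V ≃ₗ[ℂ] V) => fun i => (Γ₀ i).map (g : V →ₗ[ℂ] V))
      (Ugrp le F) {Γ | SplitsF le F Γ} ∧
    ∀ Γ : I → Submodule ℂ V, SplitsF le F Γ →
      ∃! g : V ≃ₗ[ℂ] V, g ∈ Ugrp le F ∧ ∀ i, (Γ₀ i).map (g : V →ₗ[ℂ] V) = Γ i := by
  have := hle
  refine ⟨⟨fun g hg => splits_map_of_mem_Ugrp hΓ₀ hg,
    fun g hg g' hg' hgg' => eq_of_mem_Ugrp_of_map_eq hΓ₀ hg hg' (congrFun hgg'),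
    fun Γ hΓ => ?_⟩, fun Γ hΓ => ?_⟩
  · obtain ⟨g, hg, hmap⟩ := exists_mem_Ugrp_map_eq hΓ₀ hΓ
    exact ⟨g, hg, funext hmap⟩
  · obtain ⟨g, hg, hmap⟩ := exists_mem_Ugrp_map_eq hΓ₀ hΓ
    exact ⟨g, ⟨hg, hmap⟩, fun g' ⟨hg', hmap'⟩ =>
      eq_of_mem_Ugrp_of_map_eq hΓ₀ hg' hg fun i => (hmap' i).trans (hmap i).symm⟩

/-- given a grading `Γ₀` splitting `F`, the map `g ↦ (i ↦ g(Γ₀(i)))` is a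
bijection from `U(F)` onto the set of all `I`-gradings of `V` splitting `F`; in particular,
every grading splitting `F` is of the form `g(Γ₀)` for a unique `g ∈ U(F)`. -/
theorem splittings_torsor_under_unipotent_radical
    (le : I → I → Prop) (hle : IsLinearOrder I le)
    (F Γ₀ : I → Submodule ℂ V) (hF : IsIFiltration le F) (hΓ₀ : SplitsF le F Γ₀) :
    Set.BijOn (fun (g : V ≃ₗ[ℂ] V) => fun i => (Γ₀ i).map (g : V →ₗ[ℂ] V))
      (Ugrp le F) {Γ | SplitsF le F Γ} ∧
    ∀ Γ : I → Submodule ℂ V, SplitsF le F Γ →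
      ∃! g : V ≃ₗ[ℂ] V, g ∈ Ugrp le F ∧ ∀ i, (Γ₀ i).map (g : V →ₗ[ℂ] V) = Γ i :=
  splittings_torsor_under_unipotent_radical_general le hle F Γ₀ hΓ₀
end

section
/- Let V be a finite-dimensional complex vector space and I a finite set carrying two total orders ≤₁ and ≤₂. Let F₁ be an I-filtration of V for ≤₁ and F₂ an I-filtration of V for ≤₂, and suppose the I-gradings Γ₁ and Γ₂ of V both split F₁ (for ≤₁) and both split F₂ (for ≤₂). If g₁ ∈ GL(V) satisfies g₁(Γ₁(i)) = Γ₂(i) for all i and (g₁ − 1)(F₁(i)) ⊆ F₁(<₁ i) for all i, and g₂ ∈ GL(V) satisfies g₂(Γ₁(i)) = Γ₂(i) for all i and (g₂ − 1)(F₂(i)) ⊆ F₂(<₂ i) for all i, then g₁ = g₂. (The wild monodromy of a pair of compatible gradings does not depend on the choice of filtration split by both.) -/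
/-!
For `v ∈ Γ₁(i)` and `g ∈ U(F)`, the difference `g v - v` lies in `F(<i)`, which is contained in
`⨁_{j ≠ i} Γ₂(j)` because `Γ₂` splits `F`. If moreover `g v ∈ Γ₂(i)`, then `g v` is the
`Γ₂(i)`-component of `v`, which does not involve `F`. So `g₁` and `g₂` agree on every `Γ₁(i)`,
and these span `V`.
-/

open Submodule

variable {V : Type} [AddCommGroup V] [Module ℂ V] [FiniteDimensional ℂ V]
variable {I : Type} [Fintype I]

/-- `F` is an `I`-filtration of `V` with respect to the order `le`. -/
def IsFiltrationLE (le : I → I → Prop) (F : I → Submodule ℂ V) : Prop :=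
  ∀ i j, le i j → F i ≤ F j

section

variable {E ι : Type} [AddCommGroup E] [Module ℂ E] {le : ι → ι → Prop}

theorem le_assocFilt_self [Std.Refl le] (Γ : ι → Submodule ℂ E) (i : ι) :
    Γ i ≤ assocFilt Γ le i :=
  le_biSup Γ (refl_of le i)

theorem filtLT_assocFilt_le_iSup_ne [Std.Antisymm le] (Γ : ι → Submodule ℂ E) (i : ι) :
    filtLT le (assocFilt Γ le) i ≤ ⨆ (j) (_ : j ≠ i), Γ j := by
  refine iSup₂_le fun j ⟨hji, hj_ne⟩ => iSup₂_le fun k hkj => le_iSup₂_of_le k ?_ le_rfl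
  rintro rfl
  exact hj_ne (antisymm hji hkj)

theorem sub_mem_iSup_ne_of_mem_Ugrp [Std.Refl le] [Std.Antisymm le] {F Γ Γ' : ι → Submodule ℂ E}
    (hΓ : ∀ i, F i = assocFilt Γ le i) (hΓ' : ∀ i, F i = assocFilt Γ' le i)
    {g : E ≃ₗ[ℂ] E} (hg : g ∈ Ugrp le F) {i : ι} {v : E} (hv : v ∈ Γ i) :
    g v - v ∈ ⨆ (j) (_ : j ≠ i), Γ' j := by
  have hgv := hg i v (hΓ i ▸ le_assocFilt_self Γ i hv)
  rw [funext hΓ'] at hgv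
  exact filtLT_assocFilt_le_iSup_ne Γ' i hgv

end

theorem iSupIndep.eq_of_sub_mem_iSup_ne {R M ι : Type*} [Ring R] [AddCommGroup M] [Module R M]
    {Γ : ι → Submodule R M} (hΓ : iSupIndep Γ) {i : ι} {x y : M} (hx : x ∈ Γ i) (hy : y ∈ Γ i)
    (hxy : x - y ∈ ⨆ (j) (_ : j ≠ i), Γ j) : x = y :=
  sub_eq_zero.mp <| Submodule.disjoint_def.mp (hΓ i) _ (sub_mem hx hy) hxy

theorem LinearMap.eq_of_eqOn_iSup_eq_top {R M N ι : Type*} [Semiring R] [AddCommMonoid M]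
    [AddCommMonoid N] [Module R M] [Module R N] {Γ : ι → Submodule R M} (hΓ : ⨆ i, Γ i = ⊤)
    {f g : M →ₗ[R] N} (hfg : ∀ i, ∀ v ∈ Γ i, f v = g v) : f = g :=
  eqLocus_eq_top.mp <| top_le_iff.mp <| hΓ ▸ iSup_le hfg

theorem wild_monodromy_independent_of_filtration_general
    (le₁ le₂ : I → I → Prop) (hle₁ : IsLinearOrder I le₁) (hle₂ : IsLinearOrder I le₂)
    (F₁ F₂ Γ₁ Γ₂ : I → Submodule ℂ V)
    (hΓ₁F₁ : SplitsF le₁ F₁ Γ₁) (hΓ₂F₁ : SplitsF le₁ F₁ Γ₂)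
    (hΓ₁F₂ : SplitsF le₂ F₂ Γ₁) (hΓ₂F₂ : SplitsF le₂ F₂ Γ₂)
    (g₁ g₂ : V ≃ₗ[ℂ] V)
    (hg₁Γ : ∀ i, (Γ₁ i).map (g₁ : V →ₗ[ℂ] V) = Γ₂ i) (hg₁ : g₁ ∈ Ugrp le₁ F₁)
    (hg₂Γ : ∀ i, (Γ₁ i).map (g₂ : V →ₗ[ℂ] V) = Γ₂ i) (hg₂ : g₂ ∈ Ugrp le₂ F₂) :
    g₁ = g₂ := by
  have hagree : ∀ i, ∀ v ∈ Γ₁ i, g₁ v = g₂ v := by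
    intro i v hv
    have h₁ := sub_mem_iSup_ne_of_mem_Ugrp hΓ₁F₁.2 hΓ₂F₁.2 hg₁ hv
    have h₂ := sub_mem_iSup_ne_of_mem_Ugrp hΓ₁F₂.2 hΓ₂F₂.2 hg₂ hv
    refine hΓ₂F₁.1.1.eq_of_sub_mem_iSup_ne (hg₁Γ i ▸ mem_map_of_mem hv)
      (hg₂Γ i ▸ mem_map_of_mem hv) ?_
    simpa only [sub_sub_sub_cancel_right] using sub_mem h₁ h₂
  exact LinearEquiv.toLinearMap_injective <|
    LinearMap.eq_of_eqOn_iSup_eq_top hΓ₁F₁.1.2 hagree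

/-- the wild monodromy of a pair of compatible gradings does not depend on the
choice of the filtration split by both gradings. -/
theorem wild_monodromy_independent_of_filtration
    (le₁ le₂ : I → I → Prop) (hle₁ : IsLinearOrder I le₁) (hle₂ : IsLinearOrder I le₂)
    (F₁ F₂ Γ₁ Γ₂ : I → Submodule ℂ V)
    (hF₁ : IsFiltrationLE le₁ F₁) (hF₂ : IsFiltrationLE le₂ F₂)
    (hΓ₁F₁ : SplitsF le₁ F₁ Γ₁) (hΓ₂F₁ : SplitsF le₁ F₁ Γ₂)
    (hΓ₁F₂ : SplitsF le₂ F₂ Γ₁) (hΓ₂F₂ : SplitsF le₂ F₂ Γ₂)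
    (g₁ g₂ : V ≃ₗ[ℂ] V)
    (hg₁Γ : ∀ i, (Γ₁ i).map (g₁ : V →ₗ[ℂ] V) = Γ₂ i) (hg₁ : g₁ ∈ Ugrp le₁ F₁)
    (hg₂Γ : ∀ i, (Γ₁ i).map (g₂ : V →ₗ[ℂ] V) = Γ₂ i) (hg₂ : g₂ ∈ Ugrp le₂ F₂) :
    g₁ = g₂ :=
  wild_monodromy_independent_of_filtration_general le₁ le₂ hle₁ hle₂ F₁ F₂ Γ₁ Γ₂ hΓ₁F₁ hΓ₂F₁ hΓ₁F₂
    hΓ₂F₂ g₁ g₂ hg₁Γ hg₁ hg₂Γ hg₂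
end

section
/- Let V be a finite-dimensional complex vector space, I a finite set with a total order ≤, F an I-filtration of V, and Γ₁, Γ₂ two I-gradings of V both splitting F. Let g ∈ GL(V) satisfy g(Γ₁(i)) = Γ₂(i) for all i and (g − 1)(F(i)) ⊆ F(<i) for all i. If v ∈ Γ₁(i) ∩ Γ₂(i) for some i ∈ I, then g(v) = v. -/
open Submodule

variable {V : Type} [AddCommGroup V] [Module ℂ V] [FiniteDimensional ℂ V]
variable {I : Type} [Fintype I]

/-!
`g v - v` lies in `Γ₂(i)`, and, as `v ∈ Γ₁(i) ⊆ F(i)`, also in `F(<i)`. Since `Γ₂` splits `F`,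
`F(<i)` is contained in `⨁_{j < i} Γ₂(j)`, which meets `Γ₂(i)` only in `0`.
-/

section Splitting

omit [FiniteDimensional ℂ V] [Fintype I]

variable {le : I → I → Prop} {F Γ : I → Submodule ℂ V}

theorem filtLT_le_iSup_ne [Std.Antisymm le] (hFΓ : ∀ j, F j = assocFilt Γ le j) (i : I) :
    filtLT le F i ≤ ⨆ (j) (_ : j ≠ i), Γ j :=
  iSup₂_le fun j hj => hFΓ j ▸ iSup₂_le fun k hkj =>
    le_iSup₂_of_le (f := fun k (_ : k ≠ i) => Γ k) k
      (by rintro rfl; exact hj.2 (antisymm hj.1 hkj)) le_rfl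

theorem SplitsF.le_apply [Std.Refl le] (h : SplitsF le F Γ) (i : I) : Γ i ≤ F i :=
  h.2 i ▸ le_biSup Γ (refl_of le i)

theorem SplitsF.disjoint_filtLT [Std.Antisymm le] (h : SplitsF le F Γ) (i : I) :
    Disjoint (Γ i) (filtLT le F i) :=
  (h.1.1 i).mono_right (filtLT_le_iSup_ne h.2 i)

end Splitting

theorem wild_monodromy_fixes_common_vectors_general
    (le : I → I → Prop) (hle : IsLinearOrder I le)
    (F Γ₁ Γ₂ : I → Submodule ℂ V) (hΓ₁ : SplitsF le F Γ₁) (hΓ₂ : SplitsF le F Γ₂)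
    (g : V ≃ₗ[ℂ] V)
    (hgΓ : ∀ i, (Γ₁ i).map (g : V →ₗ[ℂ] V) = Γ₂ i)
    (hgU : g ∈ Ugrp le F)
    (i : I) (v : V) (hv₁ : v ∈ Γ₁ i) (hv₂ : v ∈ Γ₂ i) :
    g v = v := by
  have := hle
  have hgv : g v ∈ Γ₂ i := hgΓ i ▸ mem_map_of_mem hv₁
  have hdiff : g v - v ∈ Γ₂ i ⊓ filtLT le F i :=
    ⟨sub_mem hgv hv₂, hgU i v (hΓ₁.le_apply i hv₁)⟩
  rwa [(hΓ₂.disjoint_filtLT i).eq_bot, mem_bot, sub_eq_zero] at hdiff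

/-- if `g` is the wild monodromy relating two gradings `Γ₁, Γ₂` splitting `F`,
then any vector lying in `Γ₁(i) ∩ Γ₂(i)` for some `i` is fixed by `g`. -/
theorem wild_monodromy_fixes_common_vectors
    (le : I → I → Prop) (hle : IsLinearOrder I le)
    (F Γ₁ Γ₂ : I → Submodule ℂ V) (hF : IsIFiltration le F)
    (hΓ₁ : SplitsF le F Γ₁) (hΓ₂ : SplitsF le F Γ₂)
    (g : V ≃ₗ[ℂ] V)
    (hgΓ : ∀ i, (Γ₁ i).map (g : V →ₗ[ℂ] V) = Γ₂ i)
    (hgU : g ∈ Ugrp le F)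
    (i : I) (v : V) (hv₁ : v ∈ Γ₁ i) (hv₂ : v ∈ Γ₂ i) :
    g v = v :=
  wild_monodromy_fixes_common_vectors_general le hle F Γ₁ Γ₂ hΓ₁ hΓ₂ g hgΓ hgU i v hv₁ hv₂
end

section
/- Let A be an n × n complex matrix such that A − 1 is nilpotent (A is unipotent). Then there exists a unique n × n complex matrix X such that X is nilpotent and Matrix.exp X = A. (Every unipotent matrix has a unique nilpotent logarithm.) -/
open NormedSpace
open PowerSeries
open scoped Polynomial Nat

/-!
`exp` and `log (1 + X)` are mutually inverse formal power series. Both identities follow by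
comparing derivatives and constant terms, using `log' = (1 + X)⁻¹`: the series
`(exp ∘ log) * log'` has derivative zero, and `(log ∘ (exp - 1))' = exp / exp = 1`.
An element `a` with `a ^ m = 0` can be substituted into any power series by truncating it below
degree `m`; this is an algebra map compatible with substitution, and at the exponential series it
is the matrix exponential. So `log (1 + N)` is a nilpotent logarithm of `1 + N`, and any nilpotent
`Z` with `exp Z = A` satisfies `Z = log (1 + (exp Z - 1)) = log A`.
-/

namespace PowerSeries

theorem constantCoeff_subst_eq_one {R : Type*} [CommRing R] {f g : R⟦X⟧}
    (hg : constantCoeff g = 0) (hf : constantCoeff f = 1) : constantCoeff (f.subst g) = 1 := by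
  have hg' : HasSubst g := HasSubst.of_constantCoeff_zero' hg
  rw [← add_sub_cancel 1 f, ← coe_substAlgHom hg', map_add, map_one, map_add, map_one,
    add_eq_left, coe_substAlgHom]
  exact constantCoeff_subst_eq_zero hg _ (by simp [hf])

section ExpLog

variable {A : Type*} [CommRing A] [Algebra ℚ A]

theorem one_add_X_mul_derivative_log : (1 + X) * d⁄dX A (log A) = 1 := by
  ext n
  rw [deriv_log]
  cases n with
  | zero => simp
  | succ n => simp [add_mul, coeff_succ_X_mul, pow_succ]

theorem derivative_derivative_log : d⁄dX A (d⁄dX A (log A)) = -d⁄dX A (log A) ^ 2 := by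
  have h := congrArg (d⁄dX A) (one_add_X_mul_derivative_log (A := A))
  simp only [Derivation.leibniz, map_add, derivative_X, Derivation.map_one_eq_zero,
    smul_eq_mul] at h
  linear_combination d⁄dX A (log A) * h -
    d⁄dX A (d⁄dX A (log A)) * one_add_X_mul_derivative_log (A := A)

variable [IsAddTorsionFree A]

theorem exp_subst_log : (exp A).subst (log A) = 1 + X := by
  have hF : d⁄dX A ((exp A).subst (log A)) = (exp A).subst (log A) * d⁄dX A (log A) := by
    rw [derivative_subst HasSubst.log, derivative_exp]
  have hFg : (exp A).subst (log A) * d⁄dX A (log A) = 1 := by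
    refine derivative.ext ?_ ?_
    · rw [Derivation.leibniz, hF, derivative_derivative_log, Derivation.map_one_eq_zero,
        smul_eq_mul, smul_eq_mul]
      ring
    · rw [map_mul, constantCoeff_subst_eq_one constantCoeff_log constantCoeff_exp]
      simp [deriv_log]
  linear_combination (1 + X) * hFg - (exp A).subst (log A) * one_add_X_mul_derivative_log (A := A)

theorem log_subst_exp_sub_one : (log A).subst (exp A - 1) = X := by
  have he := HasSubst.exp_sub_one (A := A)
  refine derivative.ext ?_ ?_
  · rw [derivative_subst he, map_sub, derivative_exp, Derivation.map_one_eq_zero, sub_zero,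
      derivative_X]
    calc (d⁄dX A (log A)).subst (exp A - 1) * exp A
        = (d⁄dX A (log A) * (1 + X)).subst (exp A - 1) := by
          rw [← coe_substAlgHom he, map_mul, map_add, map_one, substAlgHom_X]
          ring
      _ = 1 := by rw [mul_comm, one_add_X_mul_derivative_log, ← coe_substAlgHom he, map_one]
  · have h0 : constantCoeff (exp A - 1) = 0 := by simp
    rw [constantCoeff_X]
    exact constantCoeff_subst_eq_zero h0 _ constantCoeff_log

end ExpLog

section NilpotentEval

variable {R S : Type*} [CommRing R] [Ring S] [Algebra R S] {a : S} {m : ℕ}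

theorem aeval_trunc_coe_of_pow_eq_zero (ha : a ^ m = 0) (p : R[X]) :
    Polynomial.aeval a (trunc m (p : R⟦X⟧)) = Polynomial.aeval a p := by
  obtain ⟨q, hq⟩ : (Polynomial.X : R[X]) ^ m ∣ trunc m (p : R⟦X⟧) - p := by
    refine Polynomial.X_pow_dvd_iff.2 fun d hd => ?_
    simp [coeff_trunc, hd]
  rw [← sub_eq_zero, ← map_sub, hq, map_mul, map_pow, Polynomial.aeval_X, ha, zero_mul]

theorem aeval_trunc_of_pow_eq_zero_of_le (ha : a ^ m = 0) {k : ℕ} (hmk : m ≤ k) (f : R⟦X⟧) :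
    Polynomial.aeval a (trunc k f) = Polynomial.aeval a (trunc m f) := by
  rw [← trunc_trunc_of_le f hmk, aeval_trunc_coe_of_pow_eq_zero ha]

/-- Truncating at the nilpotency class, rather than at some vanishing power, makes the map
depend on `a` alone; any vanishing power gives the same values
(`aevalNilpotent_apply_of_pow_eq_zero`). -/
noncomputable def aevalNilpotent (ha : IsNilpotent a) : R⟦X⟧ →ₐ[R] S where
  toFun f := Polynomial.aeval a (trunc (nilpotencyClass a) f)
  map_one' := by
    rw [← Polynomial.coe_one, aeval_trunc_coe_of_pow_eq_zero (pow_nilpotencyClass ha), map_one]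
  map_mul' f g := by
    rw [← trunc_trunc_mul_trunc, ← Polynomial.coe_mul,
      aeval_trunc_coe_of_pow_eq_zero (pow_nilpotencyClass ha), map_mul]
  map_zero' := by simp
  map_add' f g := by simp
  commutes' r := by
    rw [algebraMap_eq, ← Polynomial.coe_C,
      aeval_trunc_coe_of_pow_eq_zero (pow_nilpotencyClass ha), Polynomial.aeval_C]

theorem aevalNilpotent_apply_of_pow_eq_zero (ha : a ^ m = 0) (f : R⟦X⟧) :
    aevalNilpotent (.mk a m ha) f = Polynomial.aeval a (trunc m f) :=
  (aeval_trunc_of_pow_eq_zero_of_le (pow_nilpotencyClass (.mk a m ha)) (Nat.sInf_le ha) f).symm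

theorem aevalNilpotent_coe (ha : IsNilpotent a) (p : R[X]) :
    aevalNilpotent ha (p : R⟦X⟧) = Polynomial.aeval a p :=
  aeval_trunc_coe_of_pow_eq_zero (pow_nilpotencyClass ha) p

theorem aevalNilpotent_X (ha : IsNilpotent a) : aevalNilpotent ha (X : R⟦X⟧) = a := by
  rw [← Polynomial.coe_X, aevalNilpotent_coe, Polynomial.aeval_X]

theorem aevalNilpotent_pow_eq_zero (ha : a ^ m = 0) {f : R⟦X⟧} (hf : constantCoeff f = 0) :
    aevalNilpotent (.mk a m ha) f ^ m = 0 := by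
  obtain ⟨g, rfl⟩ := X_dvd_iff.2 hf
  rw [← map_pow, mul_pow, map_mul, map_pow, aevalNilpotent_X, ha, zero_mul]

theorem isNilpotent_aevalNilpotent (ha : IsNilpotent a) {f : R⟦X⟧} (hf : constantCoeff f = 0) :
    IsNilpotent (aevalNilpotent ha f) :=
  let ⟨m, hm⟩ := ha
  .mk _ m (aevalNilpotent_pow_eq_zero hm hf)

theorem aevalNilpotent_subst (ha : IsNilpotent a) {g : R⟦X⟧} (hg : constantCoeff g = 0)
    (f : R⟦X⟧) :
    aevalNilpotent ha (f.subst g) = aevalNilpotent (isNilpotent_aevalNilpotent ha hg) f := by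
  obtain ⟨m, hm⟩ := id ha
  have hb := aevalNilpotent_pow_eq_zero hm hg
  have hg' : HasSubst g := HasSubst.of_constantCoeff_zero' hg
  rw [aevalNilpotent_apply_of_pow_eq_zero hb, ← coe_substAlgHom hg']
  conv_lhs => rw [eq_X_pow_mul_shift_add_trunc m f]
  rw [map_add, map_mul, map_pow, substAlgHom_X, substAlgHom_coe, map_add, map_mul, map_pow, hb,
    zero_mul, zero_add, ← Polynomial.aeval_algHom_apply]

end NilpotentEval

end PowerSeries

section Exponential

variable {𝔸 : Type*} [Ring 𝔸] [Algebra ℚ 𝔸] [TopologicalSpace 𝔸] [IsTopologicalRing 𝔸] {x : 𝔸}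

theorem NormedSpace.exp_eq_aevalNilpotent (hx : IsNilpotent x) :
    exp x = aevalNilpotent hx (PowerSeries.exp ℚ) := by
  obtain ⟨m, hm⟩ := id hx
  have hvanish : ∀ k ∉ Finset.range m, ((k ! : ℚ)⁻¹ • x ^ k) = 0 := fun k hk => by
    rw [pow_eq_zero_of_le (by simpa using hk) hm, smul_zero]
  rw [aevalNilpotent_apply_of_pow_eq_zero hm, congrFun exp_eq_tsum_rat x, tsum_eq_sum hvanish,
    Polynomial.aeval_def, eval₂_trunc_eq_sum_range]
  refine Finset.sum_congr rfl fun k _ => ?_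
  simp [coeff_exp, Algebra.smul_def]

theorem NormedSpace.exp_aevalNilpotent_log (hx : IsNilpotent x) :
    exp (aevalNilpotent hx (log ℚ)) = 1 + x := by
  rw [exp_eq_aevalNilpotent (isNilpotent_aevalNilpotent hx constantCoeff_log),
    ← aevalNilpotent_subst hx constantCoeff_log, exp_subst_log, map_add, map_one,
    aevalNilpotent_X]

theorem NormedSpace.aevalNilpotent_log_exp_sub_one (hx : IsNilpotent x)
    (h : IsNilpotent (exp x - 1)) : aevalNilpotent h (log ℚ) = x := by
  have hc : constantCoeff (PowerSeries.exp ℚ - 1) = 0 := by simp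
  calc aevalNilpotent h (log ℚ)
      = aevalNilpotent (isNilpotent_aevalNilpotent hx hc) (log ℚ) := by
        congr! 2
        rw [map_sub, map_one, exp_eq_aevalNilpotent hx]
    _ = aevalNilpotent hx ((log ℚ).subst (PowerSeries.exp ℚ - 1)) :=
        (aevalNilpotent_subst hx hc _).symm
    _ = x := by rw [log_subst_exp_sub_one, aevalNilpotent_X]

end Exponential

/-- every unipotent `n × n` complex matrix has a unique nilpotent logarithm. -/
theorem unique_nilpotent_logarithm
    (n : ℕ) (A : Matrix (Fin n) (Fin n) ℂ) (hA : IsNilpotent (A - 1)) :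
    ∃! X : Matrix (Fin n) (Fin n) ℂ, IsNilpotent X ∧ exp X = A := by
  refine ⟨aevalNilpotent hA (log ℚ), ⟨isNilpotent_aevalNilpotent hA constantCoeff_log, ?_⟩, ?_⟩
  · rw [exp_aevalNilpotent_log, add_sub_cancel]
  · rintro Z ⟨hZ, rfl⟩
    exact (aevalNilpotent_log_exp_sub_one hZ hA).symm
end

section
/- Let V be a finite-dimensional complex vector space, I a finite set, ≺ a strict partial order on I (irreflexive and transitive), and Γ₁, Γ₂ two I-gradings of V. Then the following are equivalent: (1) there exists g ∈ Sto(Γ₁,≺) with g(Γ₁(i)) = Γ₂(i) for all i ∈ I; (2) there exists g ∈ Sto(Γ₂,≺) with g(Γ₁(i)) = Γ₂(i) for all i ∈ I; (3) for every total order ≤ on I extending ≺ (i.e. such that i ≺ j implies i < j), the associated filtrations agree: F(Γ₁,≤) = F(Γ₂,≤). -/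
open Submodule

variable {V : Type} [AddCommGroup V] [Module ℂ V] [FiniteDimensional ℂ V]
variable {I : Type} [Fintype I]

/-- `F` is an `I`-filtration of `V` with respect to the order `le`. -/
def IsFiltration' (le : I → I → Prop) (F : I → Submodule ℂ V) : Prop :=
  ∀ i j, le i j → F i ≤ F j

/-- The Stokes group `Sto(Γ,≺)` of a grading `Γ` and a strict partial order `≺` on `I`:
all `g ∈ GL(V)` with `(g − 1)(Γ(j)) ⊆ Σ_{i ≺ j} Γ(i)` for all `j`. -/
def Sto (Γ : I → Submodule ℂ V) (prec : I → I → Prop) : Set (V ≃ₗ[ℂ] V) :=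
  {g | ∀ j, ∀ v ∈ Γ j, g v - v ∈ ⨆ i ∈ {i | prec i j}, Γ i}

/-!
Write `W_Γ(D) = Σ_{j ∈ D} Γ(j)`. All three conditions are equivalent to: `W_{Γ₁}(D) = W_{Γ₂}(D)` for
every `≺`-down-closed set `D`. An element of `Sto(Γ,≺)` preserves each such `W_Γ(D)`, which gives
this from (1) or (2). Every down-closed `D` is a union of initial segments of a linear extension
of `≺` that puts `D` first, which gives it from (3). Conversely, given it, `Γ₁(i)` and `Γ₂(i)` are
both complements of `W = W_{Γ₁}(≺ i) = W_{Γ₂}(≺ i)` in `W_{Γ₁}(≼ i) = W_{Γ₂}(≼ i)`, so projecting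
along `W` is an isomorphism `Γ₁(i) ≅ Γ₂(i)` that moves vectors by elements of `W`; assembled over
the grading it is the required `g`, and it lies in both Stokes groups.
-/

theorem exists_linearEquiv_sub_mem_of_sup_eq {R M : Type*} [Ring R] [AddCommGroup M] [Module R M]
    {A B C : Submodule R M} (hA : Disjoint A C) (hB : Disjoint B C) (hAB : A ⊔ C = B ⊔ C) :
    ∃ e : A ≃ₗ[R] B, ∀ a : A, (e a : M) - a ∈ C := by
  -- both `A` and `B` map isomorphically onto `(A ⊔ C) ⧸ C`
  have hinj : ∀ {P : Submodule R M}, Disjoint P C → Function.Injective (C.mkQ ∘ₗ P.subtype) := by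
    intro P hP
    rwa [← LinearMap.ker_eq_bot, LinearMap.ker_comp, ker_mkQ, ← disjoint_iff_comap_eq_bot]
  have hrange : ∀ P : Submodule R M, LinearMap.range (C.mkQ ∘ₗ P.subtype) = (P ⊔ C).map C.mkQ := by
    intro P
    rw [LinearMap.range_comp, range_subtype, Submodule.map_sup, mkQ_map_self, sup_bot_eq]
  let eA := LinearEquiv.ofInjective _ (hinj hA)
  let eB := LinearEquiv.ofInjective _ (hinj hB)
  let eAB := LinearEquiv.ofEq _ _ (show LinearMap.range (C.mkQ ∘ₗ A.subtype) =
    LinearMap.range (C.mkQ ∘ₗ B.subtype) by rw [hrange, hrange, hAB])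
  refine ⟨eA.trans (eAB.trans eB.symm), fun a => ?_⟩
  rw [← Submodule.Quotient.eq]
  exact congrArg Subtype.val (eB.apply_symm_apply (eAB (eA a)))

theorem DirectSum.IsInternal.exists_linearEquiv_apply_eq {R M ι : Type*} [Semiring R]
    [AddCommMonoid M] [Module R M] [DecidableEq ι] {A B : ι → Submodule R M} (hA : IsInternal A)
    (hB : IsInternal B) (φ : ∀ i, A i ≃ₗ[R] B i) :
    ∃ g : M ≃ₗ[R] M, (∀ i (a : A i), g a = φ i a) ∧ ∀ i, (A i).map (g : M →ₗ[R] M) = B i := by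
  let eA := LinearEquiv.ofBijective (coeLinearMap A) hA
  let eB := LinearEquiv.ofBijective (coeLinearMap B) hB
  let g := eA.symm.trans ((DFinsupp.mapRange.linearEquiv φ).trans eB)
  have hg : ∀ i (a : A i), g a = φ i a := by
    intro i a
    have : eA.symm a = DirectSum.of _ i a := eA.symm_apply_eq.2 (coeLinearMap_of A i a).symm
    have hφ : DFinsupp.mapRange.linearEquiv φ (DirectSum.of _ i a) = DirectSum.of _ i (φ i a) :=
      DFinsupp.mapRange_single (hf := fun i => map_zero (φ i))
    change eB (DFinsupp.mapRange.linearEquiv φ (eA.symm a)) = φ i a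
    rw [this, hφ]
    exact coeLinearMap_of B i _
  refine ⟨g, hg, fun i => le_antisymm ?_ fun w hw => ?_⟩
  · rintro _ ⟨v, hv, rfl⟩
    simp [hg i ⟨v, hv⟩]
  · exact ⟨(φ i).symm ⟨w, hw⟩, coe_mem _, by simp [hg]⟩

theorem map_biSup_eq_of_map_eq {R M N ι : Type*} [Semiring R] [AddCommMonoid M] [Module R M]
    [AddCommMonoid N] [Module R N] (f : M →ₗ[R] N) {A : ι → Submodule R M}
    {B : ι → Submodule R N} (h : ∀ i, (A i).map f = B i) (D : Set ι) :
    (⨆ j ∈ D, A j).map f = ⨆ j ∈ D, B j := by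
  simp only [Submodule.map_iSup, h]

def IsDownClosed {I : Type*} (r : I → I → Prop) (D : Set I) : Prop :=
  ∀ ⦃i j⦄, r i j → j ∈ D → i ∈ D

def AgreeOnDownClosed {I α : Type*} [CompleteLattice α] (r : I → I → Prop) (Γ₁ Γ₂ : I → α) :
    Prop :=
  ∀ D, IsDownClosed r D → ⨆ j ∈ D, Γ₁ j = ⨆ j ∈ D, Γ₂ j

theorem isDownClosed_setOf_rel {I : Type*} {r : I → I → Prop}
    (htrans : ∀ i j k, r i j → r j k → r i k) (k : I) : IsDownClosed r {i | r i k} :=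
  fun i j hij hjk => htrans i j k hij hjk

theorem exists_isLinearOrder_of_isDownClosed {I : Type*} {prec : I → I → Prop}
    (hirr : ∀ i, ¬ prec i i) (htrans : ∀ i j k, prec i j → prec j k → prec i k) {D : Set I}
    (hD : IsDownClosed prec D) :
    ∃ le : I → I → Prop, IsLinearOrder I le ∧ (∀ i j, prec i j → le i j ∧ ¬ le j i) ∧
      ∀ i j, le j i → i ∈ D → j ∈ D := by
  -- `≺` made reflexive, with all of `D` placed below its complement
  let r : I → I → Prop := fun a b => a = b ∨ prec a b ∨ (a ∈ D ∧ b ∉ D)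
  have : IsPartialOrder I r :=
    { refl := fun a => Or.inl rfl
      trans := by
        rintro a b c (rfl | hab | ⟨ha, hb⟩) (rfl | hbc | ⟨hb', hc⟩) <;> grind [IsDownClosed]
      antisymm := by
        rintro a b (rfl | hab | ⟨ha, hb⟩) (hba | hba | ⟨hb', ha'⟩) <;> grind [IsDownClosed] }
  obtain ⟨le, hlin, hrle⟩ := extend_partialOrder r
  have hanti : ∀ a b, r a b → le b a → a = b := fun a b hab hba => antisymm (hrle _ _ hab) hba
  refine ⟨le, hlin, fun i j hij => ⟨hrle _ _ (Or.inr (Or.inl hij)), fun hji => ?_⟩,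
    fun i j hji hi => by_contra fun hj => ?_⟩
  · exact hirr i (by rwa [← hanti i j (Or.inr (Or.inl hij)) hji] at hij)
  · exact hj (hanti i j (Or.inr (Or.inr ⟨hi, hj⟩)) hji ▸ hi)

section

variable {V I : Type} [AddCommGroup V] [Module ℂ V] {prec : I → I → Prop}
  {Γ Γ₁ Γ₂ : I → Submodule ℂ V} {g : V ≃ₗ[ℂ] V}

theorem IsGrading.isInternal [DecidableEq I] (h : IsGrading Γ) : DirectSum.IsInternal Γ :=
  DirectSum.isInternal_submodule_of_iSupIndep_of_iSup_eq_top h.1 h.2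

theorem map_biSup_le_of_mem_Sto (hg : g ∈ Sto Γ prec) {D : Set I} (hD : IsDownClosed prec D) :
    (⨆ j ∈ D, Γ j).map (g : V →ₗ[ℂ] V) ≤ ⨆ j ∈ D, Γ j := by
  simp only [Submodule.map_iSup]
  refine iSup₂_le fun j hj => ?_
  rintro _ ⟨v, hv, rfl⟩
  have hlower : (⨆ i ∈ {i | prec i j}, Γ i) ≤ ⨆ i ∈ D, Γ i := biSup_mono fun i hi => hD hi hj
  simpa using add_mem (le_biSup Γ hj hv) (hlower (hg j v hv))

theorem map_biSup_eq_of_mem_Sto [FiniteDimensional ℂ V] (hg : g ∈ Sto Γ prec) {D : Set I}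
    (hD : IsDownClosed prec D) : (⨆ j ∈ D, Γ j).map (g : V →ₗ[ℂ] V) = ⨆ j ∈ D, Γ j :=
  eq_of_le_of_finrank_eq (map_biSup_le_of_mem_Sto hg hD) (LinearEquiv.finrank_map_eq g _)

theorem agreeOnDownClosed_of_mem_Sto_left [FiniteDimensional ℂ V] (hg : g ∈ Sto Γ₁ prec)
    (hmap : ∀ i, (Γ₁ i).map (g : V →ₗ[ℂ] V) = Γ₂ i) : AgreeOnDownClosed prec Γ₁ Γ₂ :=
  fun D hD => (map_biSup_eq_of_mem_Sto hg hD).symm.trans (map_biSup_eq_of_map_eq _ hmap D)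

theorem agreeOnDownClosed_of_mem_Sto_right [FiniteDimensional ℂ V] (hg : g ∈ Sto Γ₂ prec)
    (hmap : ∀ i, (Γ₁ i).map (g : V →ₗ[ℂ] V) = Γ₂ i) : AgreeOnDownClosed prec Γ₁ Γ₂ :=
  fun D hD => map_injective_of_injective g.injective
    ((map_biSup_eq_of_map_eq _ hmap D).trans (map_biSup_eq_of_mem_Sto hg hD).symm)

theorem AgreeOnDownClosed.assocFilt_eq (h : AgreeOnDownClosed prec Γ₁ Γ₂) {le : I → I → Prop}
    (hlin : IsLinearOrder I le) (hext : ∀ i j, prec i j → le i j ∧ ¬ le j i) (i : I) :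
    assocFilt Γ₁ le i = assocFilt Γ₂ le i :=
  h _ fun a b hab hb => hlin.trans a b i (hext a b hab).1 hb

theorem biSup_eq_biSup_assocFilt (Γ : I → Submodule ℂ V) {le : I → I → Prop}
    (hrefl : ∀ i, le i i) {D : Set I} (hD : ∀ i j, le j i → i ∈ D → j ∈ D) :
    ⨆ j ∈ D, Γ j = ⨆ i ∈ D, assocFilt Γ le i :=
  le_antisymm
    (iSup₂_le fun j hj =>
      (le_biSup Γ (show j ∈ {k | le k j} from hrefl j)).trans (le_biSup (assocFilt Γ le) hj))
    (iSup₂_le fun i hi => iSup₂_le fun j hj => le_biSup Γ (hD i j hj hi))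

theorem agreeOnDownClosed_of_assocFilt_eq (hirr : ∀ i, ¬ prec i i)
    (htrans : ∀ i j k, prec i j → prec j k → prec i k)
    (h : ∀ le : I → I → Prop, IsLinearOrder I le → (∀ i j, prec i j → le i j ∧ ¬ le j i) →
      ∀ i, assocFilt Γ₁ le i = assocFilt Γ₂ le i) :
    AgreeOnDownClosed prec Γ₁ Γ₂ := by
  intro D hD
  obtain ⟨le, hlin, hext, hinit⟩ := exists_isLinearOrder_of_isDownClosed hirr htrans hD
  have hrefl : ∀ i, le i i := hlin.refl
  rw [biSup_eq_biSup_assocFilt Γ₁ hrefl hinit, biSup_eq_biSup_assocFilt Γ₂ hrefl hinit]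
  simp only [h le hlin hext]

theorem AgreeOnDownClosed.mem_Sto_of_mem_Sto (htrans : ∀ i j k, prec i j → prec j k → prec i k)
    (h : AgreeOnDownClosed prec Γ₁ Γ₂) (hg : g ∈ Sto Γ₁ prec)
    (hmap : ∀ i, (Γ₁ i).map (g : V →ₗ[ℂ] V) = Γ₂ i) : g ∈ Sto Γ₂ prec := by
  intro j v hv
  rw [← hmap j] at hv
  obtain ⟨w, hw, rfl⟩ := hv
  have hlower := isDownClosed_setOf_rel htrans j
  rw [← h _ hlower, LinearEquiv.coe_coe, ← map_sub]
  exact map_biSup_le_of_mem_Sto hg hlower ⟨_, hg j w hw, rfl⟩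

theorem AgreeOnDownClosed.exists_mem_Sto (hirr : ∀ i, ¬ prec i i)
    (htrans : ∀ i j k, prec i j → prec j k → prec i k) (h₁ : IsGrading Γ₁) (h₂ : IsGrading Γ₂)
    (h : AgreeOnDownClosed prec Γ₁ Γ₂) :
    ∃ g ∈ Sto Γ₁ prec, ∀ i, (Γ₁ i).map (g : V →ₗ[ℂ] V) = Γ₂ i := by
  classical
  have hlower := isDownClosed_setOf_rel htrans
  have hlowerInsert : ∀ i, IsDownClosed prec (insert i {j | prec j i}) := by
    rintro i a b hab (rfl | hb)
    exacts [Or.inr hab, Or.inr (htrans _ _ _ hab hb)]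
  have hsup : ∀ i, Γ₁ i ⊔ ⨆ j ∈ {j | prec j i}, Γ₁ j = Γ₂ i ⊔ ⨆ j ∈ {j | prec j i}, Γ₁ j :=
    fun i => calc
      _ = ⨆ j ∈ insert i {j | prec j i}, Γ₁ j := iSup_insert.symm
      _ = ⨆ j ∈ insert i {j | prec j i}, Γ₂ j := h _ (hlowerInsert i)
      _ = _ := by rw [iSup_insert, h _ (hlower i)]
  have hφ (i : I) : ∃ e : Γ₁ i ≃ₗ[ℂ] Γ₂ i, ∀ a : Γ₁ i,
      (e a : V) - a ∈ ⨆ j ∈ {j | prec j i}, Γ₁ j := by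
    refine exists_linearEquiv_sub_mem_of_sup_eq (h₁.1.disjoint_biSup (hirr i)) ?_ (hsup i)
    rw [h _ (hlower i)]
    exact h₂.1.disjoint_biSup (hirr i)
  choose φ hφ using hφ
  obtain ⟨g, hgφ, hmap⟩ := h₁.isInternal.exists_linearEquiv_apply_eq h₂.isInternal φ
  refine ⟨g, fun j v hv => ?_, hmap⟩
  simpa only [hgφ j ⟨v, hv⟩] using hφ j ⟨v, hv⟩

end

/-- for two gradings `Γ₁, Γ₂` and a strict partial order `≺` on `I`, the
following are equivalent: (1) some element of `Sto(Γ₁,≺)` takes `Γ₁` to `Γ₂`; (2) some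
element of `Sto(Γ₂,≺)` takes `Γ₁` to `Γ₂`; (3) for every total order `≤` extending `≺`, the
associated filtrations of `Γ₁` and `Γ₂` agree. -/
theorem stokes_conditions_equivalent
    (prec : I → I → Prop)
    (hirr : ∀ i, ¬ prec i i)
    (htrans : ∀ i j k, prec i j → prec j k → prec i k)
    (Γ₁ Γ₂ : I → Submodule ℂ V) (h₁ : IsGrading Γ₁) (h₂ : IsGrading Γ₂) :
    ((∃ g ∈ Sto Γ₁ prec, ∀ i, (Γ₁ i).map (g : V →ₗ[ℂ] V) = Γ₂ i) ↔
      (∀ le : I → I → Prop, IsLinearOrder I le → (∀ i j, prec i j → le i j ∧ ¬ le j i) →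
        ∀ i, assocFilt Γ₁ le i = assocFilt Γ₂ le i)) ∧
    ((∃ g ∈ Sto Γ₂ prec, ∀ i, (Γ₁ i).map (g : V →ₗ[ℂ] V) = Γ₂ i) ↔
      (∀ le : I → I → Prop, IsLinearOrder I le → (∀ i j, prec i j → le i j ∧ ¬ le j i) →
        ∀ i, assocFilt Γ₁ le i = assocFilt Γ₂ le i)) := by
  have hfilt : AgreeOnDownClosed prec Γ₁ Γ₂ ↔ ∀ le : I → I → Prop, IsLinearOrder I le →
      (∀ i j, prec i j → le i j ∧ ¬ le j i) → ∀ i, assocFilt Γ₁ le i = assocFilt Γ₂ le i :=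
    ⟨fun h _ hlin hext => h.assocFilt_eq hlin hext, agreeOnDownClosed_of_assocFilt_eq hirr htrans⟩
  rw [← hfilt]
  have hsto (h : AgreeOnDownClosed prec Γ₁ Γ₂) := h.exists_mem_Sto hirr htrans h₁ h₂
  refine ⟨⟨fun ⟨g, hg, hmap⟩ => agreeOnDownClosed_of_mem_Sto_left hg hmap, hsto⟩,
    ⟨fun ⟨g, hg, hmap⟩ => agreeOnDownClosed_of_mem_Sto_right hg hmap, fun h => ?_⟩⟩
  obtain ⟨g, hg, hmap⟩ := hsto h
  exact ⟨g, h.mem_Sto_of_mem_Sto htrans hg hmap, hmap⟩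
end

section
/- Let V be a finite-dimensional complex vector space, I a finite set, ≺ a strict partial order on I (irreflexive and transitive), and Γ₁, Γ₂ two I-gradings of V. Then there is at most one g ∈ GL(V) such that g(Γ₁(i)) = Γ₂(i) for all i ∈ I and g ∈ Sto(Γ₁,≺), i.e. (g − 1)(Γ₁(j)) ⊆ Σ_{i ≺ j} Γ₁(i) for all j ∈ I. -/
open Submodule

variable {V : Type} [AddCommGroup V] [Module ℂ V] [FiniteDimensional ℂ V]
variable {I : Type} [Fintype I]

/-- `F` is an `I`-filtration of `V` with respect to the order `le`. -/
def IsFiltrationI (le : I → I → Prop) (F : I → Submodule ℂ V) : Prop :=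
  ∀ i j, le i j → F i ≤ F j

/-! If `g` and `g'` both take `Γ₁(j)` onto `Γ₂(j)`, then `u := g'⁻¹ (g v)` lies in `Γ₁(j)` for
`v ∈ Γ₁(j)`, and the Stokes conditions for `g` at `v` and for `g'` at `u` put `u - v` into
`Σ_{i ≺ j} Γ₁(i)`. Since `≺` is irreflexive, that sum meets `Γ₁(j)` trivially, so `u = v`,
i.e. `g v = g' v`. The pieces `Γ₁(j)` span `V`, hence `g = g'`. -/

theorem LinearMap.eqOn_of_map_eq_of_sub_mem {R M : Type*} [Ring R] [AddCommGroup M] [Module R M]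
    {W S : Submodule R M} (hWS : Disjoint W S) {f f' : M →ₗ[R] M} (hmap : W.map f = W.map f')
    (hf : ∀ v ∈ W, f v - v ∈ S) (hf' : ∀ v ∈ W, f' v - v ∈ S) : ∀ v ∈ W, f v = f' v := by
  intro v hv
  obtain ⟨u, hu, hfu⟩ : f v ∈ W.map f' := hmap ▸ mem_map_of_mem hv
  have hS : u - v ∈ S := by
    have h := S.sub_mem (hf v hv) (hf' u hu)
    rwa [← hfu, sub_sub_sub_cancel_left] at h
  have huv : u = v := sub_eq_zero.1 (disjoint_def.1 hWS _ (W.sub_mem hu hv) hS)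
  rw [← hfu, huv]

theorem LinearMap.ext_of_iSup_eq_top {R M N ι : Type*} [Semiring R] [AddCommMonoid M]
    [AddCommMonoid N] [Module R M] [Module R N] {p : ι → Submodule R M} (hp : ⨆ i, p i = ⊤)
    {f g : M →ₗ[R] N} (h : ∀ i, ∀ v ∈ p i, f v = g v) : f = g :=
  eqLocus_eq_top.1 (eq_top_iff.2 (hp ▸ iSup_le h))

theorem stokes_group_element_unique_general
    (prec : I → I → Prop)
    (hirr : ∀ i, ¬ prec i i)
    (Γ₁ Γ₂ : I → Submodule ℂ V) (h₁ : IsGrading Γ₁)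
    (g g' : V ≃ₗ[ℂ] V)
    (hg : g ∈ Sto Γ₁ prec) (hgΓ : ∀ i, (Γ₁ i).map (g : V →ₗ[ℂ] V) = Γ₂ i)
    (hg' : g' ∈ Sto Γ₁ prec) (hg'Γ : ∀ i, (Γ₁ i).map (g' : V →ₗ[ℂ] V) = Γ₂ i) :
    g = g' := by
  have hagree : ∀ j, ∀ v ∈ Γ₁ j, g v = g' v := fun j =>
    LinearMap.eqOn_of_map_eq_of_sub_mem (h₁.1.disjoint_biSup (y := {i | prec i j}) (hirr j))
      ((hgΓ j).trans (hg'Γ j).symm) (hg j) (hg' j)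
  exact LinearEquiv.toLinearMap_injective (LinearMap.ext_of_iSup_eq_top h₁.2 hagree)

/-- there is at most one element of the Stokes group `Sto(Γ₁,≺)` taking the
grading `Γ₁` to the grading `Γ₂`. -/
theorem stokes_group_element_unique
    (prec : I → I → Prop)
    (hirr : ∀ i, ¬ prec i i)
    (htrans : ∀ i j k, prec i j → prec j k → prec i k)
    (Γ₁ Γ₂ : I → Submodule ℂ V) (h₁ : IsGrading Γ₁) (h₂ : IsGrading Γ₂)
    (g g' : V ≃ₗ[ℂ] V)
    (hg : g ∈ Sto Γ₁ prec) (hgΓ : ∀ i, (Γ₁ i).map (g : V →ₗ[ℂ] V) = Γ₂ i)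
    (hg' : g' ∈ Sto Γ₁ prec) (hg'Γ : ∀ i, (Γ₁ i).map (g' : V →ₗ[ℂ] V) = Γ₂ i) :
    g = g' :=
  stokes_group_element_unique_general prec hirr Γ₁ Γ₂ h₁ g g' hg hgΓ hg' hg'Γ
end

section
/- Let V be a finite-dimensional complex vector space, I a finite set, ≺ a strict partial order on I (irreflexive and transitive), and Γ₁, Γ₂ two I-gradings of V. If there exists g ∈ Sto(Γ₁,≺) with g(Γ₁(i)) = Γ₂(i) for all i ∈ I, then the two Stokes groups coincide: Sto(Γ₁,≺) = Sto(Γ₂,≺). -/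
open Submodule

variable {V : Type} [AddCommGroup V] [Module ℂ V] [FiniteDimensional ℂ V]
variable {I : Type} [Fintype I]

/-!
The Stokes group is natural in the grading: `Sto(gΓ, ≺) = g Sto(Γ, ≺) g⁻¹`. For transitive `≺` it
is moreover a subgroup of `GL(V)`: every `g ∈ Sto(Γ, ≺)` has `(g - 1)(Σ_{i ≺ j} Γ(i)) ⊆ Σ_{i ≺ j} Γ(i)`,
which gives closure under products, and as `V` is finite-dimensional `g` then maps `Σ_{i ≺ j} Γ(i)`
onto itself, which gives inverses. Hence if `g ∈ Sto(Γ₁, ≺)` carries `Γ₁` to `Γ₂`, then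
`Sto(Γ₂, ≺) = g Sto(Γ₁, ≺) g⁻¹ = Sto(Γ₁, ≺)`.
-/

def supBelow (Γ : I → Submodule ℂ V) (prec : I → I → Prop) (j : I) : Submodule ℂ V :=
  ⨆ i ∈ {i | prec i j}, Γ i

section Transport

omit [FiniteDimensional ℂ V] [Fintype I]

variable (Γ : I → Submodule ℂ V) (prec : I → I → Prop) (g h : V ≃ₗ[ℂ] V)

theorem supBelow_map (j : I) :
    supBelow (fun i => (Γ i).map (g : V →ₗ[ℂ] V)) prec j =
      (supBelow Γ prec j).map (g : V →ₗ[ℂ] V) := by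
  simp only [supBelow, Submodule.map_iSup]

theorem mem_sto_map_iff :
    h ∈ Sto (fun i => (Γ i).map (g : V →ₗ[ℂ] V)) prec ↔ g⁻¹ * h * g ∈ Sto Γ prec := by
  refine forall_congr' fun j => ?_
  change (∀ v ∈ (Γ j).map (g : V →ₗ[ℂ] V), h v - v ∈ supBelow (fun i => _) prec j) ↔
    ∀ u ∈ Γ j, (g⁻¹ * h * g) u - u ∈ supBelow Γ prec j
  simp only [supBelow_map, Submodule.mem_map_equiv]
  rw [g.surjective.forall]
  simp [LinearEquiv.mul_apply]

end Transport

section StokesSubgroup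

omit [Fintype I]

variable {prec : I → I → Prop} (htrans : ∀ i j k, prec i j → prec j k → prec i k)
  {Γ : I → Submodule ℂ V} {g h : V ≃ₗ[ℂ] V}

include htrans

omit [FiniteDimensional ℂ V] in
theorem supBelow_mono {i j : I} (hij : prec i j) : supBelow Γ prec i ≤ supBelow Γ prec j :=
  iSup₂_le fun k hk => le_iSup₂_of_le k (htrans k i j hk hij) le_rfl

omit [FiniteDimensional ℂ V] in
theorem sub_mem_supBelow_of_mem_sto (hg : g ∈ Sto Γ prec) {j : I} {v : V}
    (hv : v ∈ supBelow Γ prec j) : g v - v ∈ supBelow Γ prec j := by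
  have hle : supBelow Γ prec j ≤ (supBelow Γ prec j).comap ((g : V →ₗ[ℂ] V) - LinearMap.id) :=
    iSup₂_le fun i hi u hu => supBelow_mono htrans hi (hg i u hu)
  simpa using hle hv

omit [FiniteDimensional ℂ V] in
theorem mul_mem_sto (hg : g ∈ Sto Γ prec) (hh : h ∈ Sto Γ prec) : g * h ∈ Sto Γ prec := by
  intro j v hv
  have hhv := hh j v hv
  have key : (g * h) v - v = (g (h v - v) - (h v - v)) + (h v - v) + (g v - v) := by
    simp only [LinearEquiv.mul_apply, map_sub]
    abel
  rw [key]
  exact add_mem (add_mem (sub_mem_supBelow_of_mem_sto htrans hg hhv) hhv) (hg j v hv)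

theorem map_supBelow_of_mem_sto (hg : g ∈ Sto Γ prec) (j : I) :
    (supBelow Γ prec j).map (g : V →ₗ[ℂ] V) = supBelow Γ prec j := by
  refine Submodule.eq_of_le_of_finrank_eq ?_ (g.finrank_map_eq _)
  rintro _ ⟨v, hv, rfl⟩
  simpa using add_mem hv (sub_mem_supBelow_of_mem_sto htrans hg hv)

theorem inv_mem_sto (hg : g ∈ Sto Γ prec) : g⁻¹ ∈ Sto Γ prec := by
  intro j v hv
  obtain ⟨u, hu, hgu⟩ : g v - v ∈ (supBelow Γ prec j).map (g : V →ₗ[ℂ] V) := by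
    rw [map_supBelow_of_mem_sto htrans hg]
    exact hg j v hv
  have key : g⁻¹ v - v = -u := g.injective <| by
    simp only [LinearEquiv.coe_coe] at hgu
    simp [hgu]
  rw [key]
  exact neg_mem hu

def stoSubgroup : Subgroup (V ≃ₗ[ℂ] V) where
  carrier := Sto Γ prec
  one_mem' := fun j v _ => by simp
  mul_mem' := mul_mem_sto htrans
  inv_mem' := inv_mem_sto htrans

end StokesSubgroup

theorem stokes_groups_coincide_general
    (prec : I → I → Prop)
    (htrans : ∀ i j k, prec i j → prec j k → prec i k)
    (Γ₁ Γ₂ : I → Submodule ℂ V)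
    (hex : ∃ g ∈ Sto Γ₁ prec, ∀ i, (Γ₁ i).map (g : V →ₗ[ℂ] V) = Γ₂ i) :
    Sto Γ₁ prec = Sto Γ₂ prec := by
  obtain ⟨g, hg, hmap⟩ := hex
  obtain rfl : (fun i => (Γ₁ i).map (g : V →ₗ[ℂ] V)) = Γ₂ := funext hmap
  let H := stoSubgroup (Γ := Γ₁) htrans
  have hgH : g ∈ H := hg
  ext h
  rw [mem_sto_map_iff]
  change h ∈ H ↔ g⁻¹ * h * g ∈ H
  rw [H.mul_mem_cancel_right hgH, H.mul_mem_cancel_left (H.inv_mem hgH)]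

/-- if some element of `Sto(Γ₁,≺)` takes the grading `Γ₁` to the grading `Γ₂`,
then the two Stokes groups coincide: `Sto(Γ₁,≺) = Sto(Γ₂,≺)`. -/
theorem stokes_groups_coincide
    (prec : I → I → Prop)
    (hirr : ∀ i, ¬ prec i i)
    (htrans : ∀ i j k, prec i j → prec j k → prec i k)
    (Γ₁ Γ₂ : I → Submodule ℂ V) (h₁ : IsGrading Γ₁) (h₂ : IsGrading Γ₂)
    (hex : ∃ g ∈ Sto Γ₁ prec, ∀ i, (Γ₁ i).map (g : V →ₗ[ℂ] V) = Γ₂ i) :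
    Sto Γ₁ prec = Sto Γ₂ prec :=
  stokes_groups_coincide_general prec htrans Γ₁ Γ₂ hex
end

section
/- Let V be a finite-dimensional complex vector space, I a finite set with a total order ≤, F an I-filtration of V, and Γ an I-grading of V splitting F. Then every g ∈ GL(V) with g(F(i)) = F(i) for all i ∈ I factors uniquely as g = u ∘ h, where h ∈ GL(V) satisfies h(Γ(i)) = Γ(i) for all i and u ∈ GL(V) satisfies (u − 1)(F(i)) ⊆ F(<i) for all i. (The parabolic group of filtered automorphisms is the product of its unipotent radical and the graded automorphism group.) -/
open Submodule

variable {V : Type} [AddCommGroup V] [Module ℂ V] [FiniteDimensional ℂ V]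
variable {I : Type} [Fintype I]

/-!
The Levi factor of `g` is its block diagonal `h = ∑ᵢ pᵢ g pᵢ`, where `pᵢ` are the projections
of the grading. Since `g` preserves the filtration, `g - h` maps `F(i)` into `F(<i)`, and
`g ↦ h` is multiplicative on filtration-preserving maps (the off-diagonal blocks only push
vectors down the filtration, where `pᵢ` vanishes). Hence `h` is invertible with inverse the
block diagonal of `g⁻¹`, and `u = g h⁻¹` lies in the unipotent radical. Uniqueness: if
`u x = u' z` with `x, z ∈ Γ(i)`, then `z - x = (u x - x) - (u' z - z)` lies in
`Γ(i) ∩ F(<i) = 0`.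
-/

open DirectSum

section Decomposition

variable {R M : Type*} [Semiring R] [AddCommMonoid M] [Module R M]

theorem le_comap_of_map_eq {p : Submodule R M} {g : M ≃ₗ[R] M}
    (h : p.map (g : M →ₗ[R] M) = p) : p ≤ p.comap (g : M →ₗ[R] M) :=
  Submodule.map_le_iff_le_comap.1 h.le

theorem le_comap_symm_of_map_eq {p : Submodule R M} {g : M ≃ₗ[R] M}
    (h : p.map (g : M →ₗ[R] M) = p) : p ≤ p.comap (g.symm : M →ₗ[R] M) := by
  rw [← Submodule.map_equiv_eq_comap_symm, h]

variable {ι : Type*} [DecidableEq ι] (ℳ : ι → Submodule R M) [Decomposition ℳ]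

def gradedProj (i : ι) : M →ₗ[R] M :=
  (ℳ i).subtype ∘ₗ component R ι (fun i => ℳ i) i ∘ₗ (decomposeLinearEquiv ℳ).toLinearMap

theorem gradedProj_apply (i : ι) (x : M) : gradedProj ℳ i x = decompose ℳ x i := rfl

theorem gradedProj_mem (i : ι) (x : M) : gradedProj ℳ i x ∈ ℳ i := (decompose ℳ x i).2

theorem gradedProj_of_mem {i : ι} {x : M} (hx : x ∈ ℳ i) : gradedProj ℳ i x = x :=
  decompose_of_mem_same ℳ hx

theorem gradedProj_of_mem_of_ne {i j : ι} {x : M} (hx : x ∈ ℳ i) (hij : i ≠ j) :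
    gradedProj ℳ j x = 0 :=
  decompose_of_mem_ne ℳ hx hij

variable [Fintype ι]

theorem sum_gradedProj (x : M) : ∑ i, gradedProj ℳ i x = x := by
  conv_rhs => rw [← (decompose ℳ).symm_apply_apply x, ← sum_univ_of (decompose ℳ x)]
  simp only [decompose_symm_sum, decompose_symm_of, gradedProj_apply]

def gradedPart (f : M →ₗ[R] M) : M →ₗ[R] M :=
  ∑ i, gradedProj ℳ i ∘ₗ f ∘ₗ gradedProj ℳ i

theorem gradedPart_apply_of_mem (f : M →ₗ[R] M) {i : ι} {x : M} (hx : x ∈ ℳ i) :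
    gradedPart ℳ f x = gradedProj ℳ i (f x) := by
  rw [gradedPart, LinearMap.sum_apply, Finset.sum_eq_single i]
  · simp [gradedProj_of_mem ℳ hx]
  · intro j _ hji
    simp [gradedProj_of_mem_of_ne ℳ hx hji.symm]
  · simp

theorem le_comap_gradedPart (f : M →ₗ[R] M) (i : ι) : ℳ i ≤ (ℳ i).comap (gradedPart ℳ f) :=
  fun x hx => by
    rw [Submodule.mem_comap, gradedPart_apply_of_mem ℳ f hx]
    exact gradedProj_mem ℳ i _

theorem gradedPart_id : gradedPart ℳ (LinearMap.id : M →ₗ[R] M) = LinearMap.id :=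
  decompose_lhom_ext ℳ fun i => LinearMap.ext fun x => by
    simp [gradedPart_apply_of_mem ℳ _ x.2, gradedProj_of_mem ℳ x.2]

end Decomposition

section Filtration

variable {V I : Type} [AddCommGroup V] [Module ℂ V] {le : I → I → Prop}

theorem mem_filtLT_of_mem {F : I → Submodule ℂ V} {i j : I} (hji : le j i) (hne : j ≠ i)
    {v : V} (hv : v ∈ F j) : v ∈ filtLT le F i :=
  le_iSup₂ (f := fun k (_ : k ∈ {k | le k i ∧ k ≠ i}) => F k) j ⟨hji, hne⟩ hv

theorem filtLT_le_comap {F : I → Submodule ℂ V} {f : V →ₗ[ℂ] V}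
    (hf : ∀ i, F i ≤ (F i).comap f) (i : I) : filtLT le F i ≤ (filtLT le F i).comap f :=
  iSup₂_le fun j hj _ hv => mem_filtLT_of_mem hj.1 hj.2 (hf j hv)

theorem le_assocFilt [Std.Refl le] (Γ : I → Submodule ℂ V) (i : I) : Γ i ≤ assocFilt Γ le i :=
  le_iSup₂ (f := fun j (_ : j ∈ {j | le j i}) => Γ j) i (refl_of le i)

theorem assocFilt_le_comap {Γ : I → Submodule ℂ V} {f : V →ₗ[ℂ] V}
    (hf : ∀ i, Γ i ≤ (Γ i).comap f) (i : I) :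
    assocFilt Γ le i ≤ (assocFilt Γ le i).comap f :=
  iSup₂_le fun j hj _ hv =>
    le_iSup₂ (f := fun k (_ : k ∈ {k | le k i}) => Γ k) j hj (hf j hv)

theorem disjoint_filtLT_assocFilt [Std.Antisymm le] {Γ : I → Submodule ℂ V} (hΓ : iSupIndep Γ)
    (i : I) : Disjoint (Γ i) (filtLT le (assocFilt Γ le) i) := by
  refine (hΓ i).mono_right (iSup₂_le fun j hj => iSup₂_le fun k hk => ?_)
  have hki : k ≠ i := by
    rintro rfl
    exact hj.2 (antisymm hj.1 hk)
  exact le_iSup₂ (f := fun k (_ : k ≠ i) => Γ k) k hki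

theorem eq_of_mem_Ugrp_of_apply_eq [Std.Refl le] [Std.Antisymm le] {Γ : I → Submodule ℂ V}
    (hΓ : iSupIndep Γ) {u u' : V ≃ₗ[ℂ] V} (hu : u ∈ Ugrp le (assocFilt Γ le))
    (hu' : u' ∈ Ugrp le (assocFilt Γ le)) {i : I} {x z : V} (hx : x ∈ Γ i) (hz : z ∈ Γ i)
    (h : u x = u' z) : x = z := by
  have hzx : z - x = (u x - x) - (u' z - z) := by rw [h]; abel
  have hmem : z - x ∈ filtLT le (assocFilt Γ le) i := by
    rw [hzx]
    exact sub_mem (hu i x (le_assocFilt Γ i hx)) (hu' i z (le_assocFilt Γ i hz))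
  exact (sub_eq_zero.1 (Submodule.disjoint_def.1 (disjoint_filtLT_assocFilt hΓ i) _
    (sub_mem hz hx) hmem)).symm

variable [DecidableEq I] {Γ : I → Submodule ℂ V} [Decomposition Γ]

theorem gradedProj_eq_zero_of_mem_assocFilt {i j : I} (hji : ¬ le j i) {v : V}
    (hv : v ∈ assocFilt Γ le i) : gradedProj Γ j v = 0 := by
  have hker : assocFilt Γ le i ≤ LinearMap.ker (gradedProj Γ j) :=
    iSup₂_le fun k hk _ hw => gradedProj_of_mem_of_ne Γ hw (by rintro rfl; exact hji hk)
  exact hker hv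

theorem gradedProj_eq_zero_of_mem_filtLT [Std.Antisymm le] {i : I} {v : V}
    (hv : v ∈ filtLT le (assocFilt Γ le) i) : gradedProj Γ i v = 0 := by
  have hker : filtLT le (assocFilt Γ le) i ≤ LinearMap.ker (gradedProj Γ i) :=
    iSup₂_le fun _ hj _ hw =>
      gradedProj_eq_zero_of_mem_assocFilt (fun hij => hj.2 (antisymm hj.1 hij)) hw
  exact hker hv

theorem eq_and_eq_of_comp_eq [Std.Refl le] [Std.Antisymm le] {u u' h h' : V ≃ₗ[ℂ] V}
    (hu : u ∈ Ugrp le (assocFilt Γ le)) (hu' : u' ∈ Ugrp le (assocFilt Γ le))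
    (hh : ∀ i, Γ i ≤ (Γ i).comap (h : V →ₗ[ℂ] V))
    (hh' : ∀ i, Γ i ≤ (Γ i).comap (h' : V →ₗ[ℂ] V)) (heq : ∀ v, u (h v) = u' (h' v)) :
    u = u' ∧ h = h' := by
  have hind : iSupIndep Γ := (Decomposition.isInternal Γ).submodule_iSupIndep
  obtain rfl : h = h' := LinearEquiv.toLinearMap_injective <| decompose_lhom_ext Γ fun i =>
    LinearMap.ext fun x => eq_of_mem_Ugrp_of_apply_eq hind hu hu' (hh i x.2) (hh' i x.2) (heq x)
  refine ⟨LinearEquiv.ext fun v => ?_, rfl⟩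
  simpa using heq (h.symm v)

variable [Fintype I]

theorem sub_gradedProj_mem_filtLT [Std.Refl le] {i : I} {v : V} (hv : v ∈ assocFilt Γ le i) :
    v - gradedProj Γ i v ∈ filtLT le (assocFilt Γ le) i := by
  have hsum := Finset.add_sum_erase Finset.univ (fun j => gradedProj Γ j v) (Finset.mem_univ i)
  rw [sum_gradedProj] at hsum
  rw [← eq_sub_of_add_eq' hsum]
  refine Submodule.sum_mem _ fun j hj => ?_
  by_cases hji : le j i
  · exact mem_filtLT_of_mem hji (Finset.ne_of_mem_erase hj)
      (le_assocFilt Γ j (gradedProj_mem Γ j v))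
  · rw [gradedProj_eq_zero_of_mem_assocFilt hji hv]
    exact zero_mem _

theorem sub_gradedPart_mem_filtLT [Std.Refl le] {f : V →ₗ[ℂ] V}
    (hf : ∀ i, assocFilt Γ le i ≤ (assocFilt Γ le i).comap f) {i : I} {w : V}
    (hw : w ∈ assocFilt Γ le i) : f w - gradedPart Γ f w ∈ filtLT le (assocFilt Γ le) i := by
  have hfw : f w - gradedPart Γ f w =
      ∑ j, (f (gradedProj Γ j w) - gradedProj Γ j (f (gradedProj Γ j w))) := by
    rw [gradedPart, LinearMap.sum_apply, Finset.sum_sub_distrib]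
    congr 1
    conv_lhs => rw [← sum_gradedProj Γ w, map_sum]
  rw [hfw]
  refine Submodule.sum_mem _ fun j _ => ?_
  by_cases hji : le j i
  · have hmem : f (gradedProj Γ j w) ∈ assocFilt Γ le j :=
      hf j (le_assocFilt Γ j (gradedProj_mem Γ j w))
    by_cases hj : j = i
    · subst hj
      exact sub_gradedProj_mem_filtLT hmem
    · exact mem_filtLT_of_mem hji hj
        (sub_mem hmem (le_assocFilt Γ j (gradedProj_mem Γ j _)))
  · simp [gradedProj_eq_zero_of_mem_assocFilt hji hw]

theorem gradedPart_comp [Std.Refl le] [Std.Antisymm le] {f f' : V →ₗ[ℂ] V}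
    (hf : ∀ i, assocFilt Γ le i ≤ (assocFilt Γ le i).comap f)
    (hf' : ∀ i, assocFilt Γ le i ≤ (assocFilt Γ le i).comap f') :
    gradedPart Γ (f ∘ₗ f') = gradedPart Γ f ∘ₗ gradedPart Γ f' := by
  refine decompose_lhom_ext Γ fun i => LinearMap.ext fun ⟨x, hx⟩ => ?_
  have hf'x : f' x ∈ assocFilt Γ le i := hf' i (le_assocFilt Γ i hx)
  have hker : gradedProj Γ i (f (f' x - gradedProj Γ i (f' x))) = 0 :=
    gradedProj_eq_zero_of_mem_filtLT
      (filtLT_le_comap hf i (sub_gradedProj_mem_filtLT hf'x))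
  simp only [LinearMap.comp_apply, Submodule.subtype_apply]
  rw [gradedPart_apply_of_mem Γ _ hx, gradedPart_apply_of_mem Γ _ hx,
    gradedPart_apply_of_mem Γ _ (gradedProj_mem Γ i _), LinearMap.comp_apply, ← sub_eq_zero,
    ← map_sub, ← map_sub]
  exact hker

variable [Std.Refl le] [Std.Antisymm le]

def gradedPartEquiv {g : V ≃ₗ[ℂ] V}
    (hg : ∀ i, (assocFilt Γ le i).map (g : V →ₗ[ℂ] V) = assocFilt Γ le i) : V ≃ₗ[ℂ] V :=
  LinearEquiv.ofLinearMap (gradedPart Γ g) (gradedPart Γ g.symm)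
    (by
      rw [← gradedPart_comp (fun i => le_comap_of_map_eq (hg i))
        (fun i => le_comap_symm_of_map_eq (hg i)), LinearEquiv.comp_coe, g.symm_trans_self]
      exact gradedPart_id Γ)
    (by
      rw [← gradedPart_comp (fun i => le_comap_symm_of_map_eq (hg i))
        (fun i => le_comap_of_map_eq (hg i)), LinearEquiv.comp_coe, g.self_trans_symm]
      exact gradedPart_id Γ)

theorem map_gradedPartEquiv {g : V ≃ₗ[ℂ] V}
    (hg : ∀ i, (assocFilt Γ le i).map (g : V →ₗ[ℂ] V) = assocFilt Γ le i) (i : I) :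
    (Γ i).map (gradedPartEquiv hg : V →ₗ[ℂ] V) = Γ i := by
  refine le_antisymm (Submodule.map_le_iff_le_comap.2 (le_comap_gradedPart Γ g i)) ?_
  rw [Submodule.map_equiv_eq_comap_symm]
  exact le_comap_gradedPart Γ g.symm i

theorem symm_trans_mem_Ugrp {g : V ≃ₗ[ℂ] V}
    (hg : ∀ i, (assocFilt Γ le i).map (g : V →ₗ[ℂ] V) = assocFilt Γ le i) :
    (gradedPartEquiv hg).symm.trans g ∈ Ugrp le (assocFilt Γ le) := by
  intro i v hv
  have hw : (gradedPartEquiv hg).symm v ∈ assocFilt Γ le i :=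
    assocFilt_le_comap (le_comap_gradedPart Γ g.symm) i hv
  have key := sub_gradedPart_mem_filtLT (fun i => le_comap_of_map_eq (hg i)) hw
  rwa [show gradedPart Γ g ((gradedPartEquiv hg).symm v) = v from
    (gradedPartEquiv hg).apply_symm_apply v] at key

end Filtration

theorem parabolic_levi_decomposition_general
    (le : I → I → Prop) (hle : IsLinearOrder I le)
    (F Γ : I → Submodule ℂ V) (hΓ : SplitsF le F Γ)
    (g : V ≃ₗ[ℂ] V) (hg : ∀ i, (F i).map (g : V →ₗ[ℂ] V) = F i) :
    ∃! p : (V ≃ₗ[ℂ] V) × (V ≃ₗ[ℂ] V),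
      p.1 ∈ Ugrp le F ∧
      (∀ i, (Γ i).map (p.2 : V →ₗ[ℂ] V) = Γ i) ∧
      ∀ v, p.1 (p.2 v) = g v := by
  classical
  obtain ⟨hgrading, hF⟩ := hΓ
  obtain rfl : F = assocFilt Γ le := funext hF
  let := ((isInternal_submodule_iff_iSupIndep_and_iSup_eq_top Γ).2 hgrading).chooseDecomposition
  refine ⟨((gradedPartEquiv hg).symm.trans g, gradedPartEquiv hg),
    ⟨symm_trans_mem_Ugrp hg, map_gradedPartEquiv hg, fun v => by simp⟩, ?_⟩
  rintro ⟨u, h⟩ ⟨hu, hh, huh⟩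
  obtain ⟨rfl, rfl⟩ := eq_and_eq_of_comp_eq hu (symm_trans_mem_Ugrp hg)
    (fun i => le_comap_of_map_eq (hh i)) (fun i => le_comap_of_map_eq (map_gradedPartEquiv hg i))
    (fun v => by simpa using huh v)
  rfl

/-- Levi decomposition of the parabolic subgroup of filtered automorphisms:
if `Γ` splits `F`, every automorphism `g` preserving `F` factors uniquely as `g = u ∘ h`
with `h` a graded automorphism of `(V,Γ)` and `u ∈ U(F)`. -/
theorem parabolic_levi_decomposition
    (le : I → I → Prop) (hle : IsLinearOrder I le)
    (F Γ : I → Submodule ℂ V) (hF : IsIFiltration le F) (hΓ : SplitsF le F Γ)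
    (g : V ≃ₗ[ℂ] V) (hg : ∀ i, (F i).map (g : V →ₗ[ℂ] V) = F i) :
    ∃! p : (V ≃ₗ[ℂ] V) × (V ≃ₗ[ℂ] V),
      p.1 ∈ Ugrp le F ∧
      (∀ i, (Γ i).map (p.2 : V →ₗ[ℂ] V) = Γ i) ∧
      ∀ v, p.1 (p.2 v) = g v :=
  parabolic_levi_decomposition_general le hle F Γ hΓ g hg
end
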